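/- For k ≥ r ≥ 3 and p,t ≥ 0, let μ be a partition in C_<(k,r|p,t) such that there is a 1-marked part 2t in GG(μ). Then there is no 2-marked part 2t in GG(μ). (The paper states this for the subset C_∼(k,r|p,t) ⊆ C_<(k,r|p,t); it holds on all of C_<(k,r|p,t).) -/

import Mathlib

namespace Bressoud

/-- A partition: a weakly decreasing list of positive integers. -/
structure Partition where
  parts : List ℕ
  pos : ∀ x ∈ parts, 0 < x
  sorted : parts.Pairwise (· ≥ ·)

namespace Partition

/-- `|π|`, the sum of the parts of `π`. -/
def size (π : Partition) : ℕ := π.parts.sum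

/-- `ℓ(π)`, the number of parts of `π`. -/
def numParts (π : Partition) : ℕ := π.parts.length

end Partition

lemma exists_pos_not_mem (s : List ℕ) : ∃ n, 0 < n ∧ n ∉ s := by
  refine ⟨s.sum + 1, Nat.succ_pos _, fun h => ?_⟩
  have := List.single_le_sum (l := s) (fun x _ => Nat.zero_le x) _ h
  omega

/-- The least positive integer not occurring in `s`. -/
def mex1 (s : List ℕ) : ℕ := Nat.find (exists_pos_not_mem s)

/-- Parts `p ≥ q` conflict (must receive different marks) when `p - q ≤ 2`,
with strict inequality when `p` is odd. -/
def conflict (p q : ℕ) : Bool :=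
  if p % 2 = 1 then decide (p - q < 2) else decide (p - q ≤ 2)

/-- Greedy computation of the Göllnitz–Gordon marking: the parts are processed
from smallest to largest (second argument: remaining parts in increasing
order; first argument: already processed parts with their marks), and each
part receives the least positive mark different from the marks of all already
processed conflicting parts. -/
def ggAux : List (ℕ × ℕ) → List ℕ → List (ℕ × ℕ)
  | acc, [] => acc
  | acc, p :: rest =>
      ggAux ((p, mex1 ((acc.filter fun q => conflict p q.1).map Prod.snd)) :: acc) rest

/-- The Göllnitz–Gordon marking `GG(π)` of `π`, as a list of (part, mark)
pairs in decreasing order of parts. -/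
def ggMarks (π : Partition) : List (ℕ × ℕ) := ggAux [] π.parts.reverse

/-- There is an `m`-marked part equal to `x` in `GG(π)`. -/
def Marked (π : Partition) (x m : ℕ) : Prop := (x, m) ∈ ggMarks π

instance (π : Partition) (x m : ℕ) : Decidable (Marked π x m) := by
  unfold Marked; infer_instance

/-- The `i`-th row of `GG(π)`: the `i`-marked parts, in decreasing order. -/
def row (π : Partition) (i : ℕ) : List ℕ :=
  ((ggMarks π).filter fun q => q.2 == i).map Prod.fst

/-- `N_i(π)`: the number of `i`-marked parts of `π`. -/
def Nmk (π : Partition) (i : ℕ) : ℕ := (row π i).length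

/-- `π^{(i)}_j` as a natural number (meaningful for `1 ≤ j ≤ N_i(π)`;
junk value `0` otherwise). -/
def nth (π : Partition) (i j : ℕ) : ℕ := (row π i).getD (j - 1) 0

/-- The canonical embedding of the natural numbers into `EReal`. -/
noncomputable def natE (n : ℕ) : EReal := ((n : ℝ) : EReal)

/-- `π^{(i)}_j` as an extended real, with the conventions `π^{(i)}_0 = +∞`
and `π^{(i)}_j = -∞` for `j > N_i(π)`. -/
noncomputable def rowVal (π : Partition) (i j : ℕ) : EReal :=
  if j = 0 then ⊤
  else
    match (row π i)[j - 1]? with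
    | some x => natE x
    | none => ⊥

/-- The largest `l ≥ 0` such that there is no odd part of `π` greater than or
equal to `π^{(2)}_l` (the indices `1 ≤ j ≤ N₂(π)` with this property form an
initial segment, so this is also their number). -/
def bigL (π : Partition) : ℕ :=
  ((List.range' 1 (Nmk π 2)).filter fun j =>
    decide (∀ x ∈ π.parts, x % 2 = 1 → x < nth π 2 j)).length

/-- `startPair π b = (starting type of π^{(2)}_b, s_b(π))` for `1 ≤ b ≤ N₂(π)`.
Starting types are encoded by integers: `-1` stands for `s₋₁`, and `0,1,2,3`
for `s₀,s₁,s₂,s₃`; the value `9` is a junk value used when no case applies. -/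
def startPair (π : Partition) : ℕ → ℤ × ℕ
  | 0 => (9, 0)
  | b + 1 =>
    let v := nth π 2 (b + 1)
    if bigL π < b + 1 then (-1, 0)
    else
      let okLow : Bool :=
        if b = 0 then !decide ((v + 2) ∈ π.parts)
        else !decide (Marked π (v + 2) 1) || decide ((startPair π b).2 = v + 2)
      let ok2 : Bool :=
        if b = 0 then decide (Marked π (v + 2) 1)
        else decide (Marked π (v + 2) 1) && !decide ((startPair π b).2 = v + 2)
      if decide (Marked π (v - 1) 1) && okLow then (0, v - 1)
      else if decide (Marked π (v - 2) 1) && okLow then (1, v - 2)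
      else if ok2 then (2, v + 2)
      else if decide (Marked π v 1) then (3, v)
      else (9, 0)

/-- The starting type of `π^{(2)}_b`, encoded as an integer. -/
def startType (π : Partition) (b : ℕ) : ℤ := (startPair π b).1

/-- The set `C(k,r)`: partitions with no repeated odd part, in which the parts
equal to `1` and `2` have marks at most `r - 1`, and whose Göllnitz–Gordon
marking has at most `k - 1` rows. -/
def C (k r : ℕ) : Set Partition :=
  { π | (∀ x, x % 2 = 1 → π.parts.count x ≤ 1) ∧
        (∀ x m, Marked π x m → x ≤ 2 → m ≤ r - 1) ∧
        (∀ x m, Marked π x m → m ≤ k - 1) }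

/-- The set `C_<(k,r|p,t)`. -/
noncomputable def Clt (k r p t : ℕ) : Set Partition :=
  { π | π ∈ C k r ∧
        (∀ x ∈ π.parts, x % 2 = 1 → x < 2 * t + 1) ∧
        rowVal π 2 (p + 1) < natE (2 * t + 1) ∧
        natE (2 * t + 1) < rowVal π 2 p ∧
        (rowVal π 2 p = natE (2 * t + 2) →
          startType π p = 2 ∨ startType π p = 3) ∧
        (rowVal π 2 (p + 1) = natE (2 * t) →
          startType π (p + 1) = 0 ∨ startType π (p + 1) = 1) }

/-- The set `C_=(k,r|p,t)`. -/
noncomputable def Ceq (k r p t : ℕ) : Set Partition :=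
  { π | π ∈ C k r ∧
        (2 * t + 1) ∈ π.parts ∧
        (∀ x ∈ π.parts, x % 2 = 1 → x ≤ 2 * t + 1) ∧
        (∀ m, Marked π (2 * t + 1) m → m ≤ 2) ∧
        natE (2 * t + 2) ≤ rowVal π 2 p ∧
        rowVal π 2 (p + 1) ≤ natE (2 * t + 2) ∧
        ((∃ j, 1 ≤ j ∧ j ≤ Nmk π 2 ∧ nth π 2 j = 2 * t + 2 ∧ startType π j = 0) →
          rowVal π 2 (p + 1) = natE (2 * t + 2) ∧
          ∃ i, 1 ≤ i ∧ i ≤ p + 1 ∧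
            nth π 2 i = 2 * t + 2 + 4 * (p + 1 - i) ∧
            π.parts.count (2 * t + 2 + 4 * (p + 1 - i)) = 1) ∧
        ((∃ j, 1 ≤ j ∧ j ≤ Nmk π 2 ∧ nth π 2 j = 2 * t + 2 ∧ startType π j = 2) →
          rowVal π 2 p = natE (2 * t + 2)) ∧
        ((2 * t + 2) ∈ π.parts → ¬ Marked π (2 * t + 2) 2 →
          rowVal π 2 p = natE (2 * t + 4) ∧ startType π p = 3 ∧
          ∃ i, 1 ≤ i ∧ i ≤ p ∧
            nth π 2 i = 2 * t + 4 + 4 * (p - i) ∧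
            (2 * t + 4 + 4 * (p - i) + 2) ∉ π.parts) }

/-- The first starting cluster index `p₁` of `π` (with `p₀ = p + 1`): the least
`j ≥ 1` such that `π^{(2)}_j = π^{(2)}_p + 4(p - j)` and all of
`π^{(2)}_j, …, π^{(2)}_p` have the same starting type as `π^{(2)}_p`. -/
def firstCluster (π : Partition) (p : ℕ) : ℕ :=
  ((List.range' 1 p).filter fun j =>
    (List.range' j (p + 1 - j)).all fun i =>
      decide (nth π 2 i = nth π 2 p + 4 * (p - i)) &&
      decide (startType π i = startType π p)).headD p

/-- The set `ℰ(k,r)` of partitions in `C(k,r)` with no odd parts. -/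
def E (k r : ℕ) : Set Partition :=
  { π | π ∈ C k r ∧ ∀ x ∈ π.parts, x % 2 = 0 }

/-- `C_<(k,r|m) = ⋃_{p+t=m} C_<(k,r|p,t)`. -/
noncomputable def Cltm (k r m : ℕ) : Set Partition :=
  { π | ∃ p t, p + t = m ∧ π ∈ Clt k r p t }

/-- `C_=(k,r|m) = ⋃_{p+t=m} C_=(k,r|p,t)`. -/
noncomputable def Ceqm (k r m : ℕ) : Set Partition :=
  { π | ∃ p t, p + t = m ∧ π ∈ Ceq k r p t }

/-- `I_N`: partitions into distinct odd parts, each at least `2N + 1`. -/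
def Iset (N : ℕ) : Set Partition :=
  { ζ | (∀ x ∈ ζ.parts, x % 2 = 1 ∧ 2 * N + 1 ≤ x) ∧ ζ.parts.Nodup }

/-- `F(3,3)`: pairs `(π, ζ)` with `π ∈ ℰ(3,3)` and `ζ ∈ I_{N₂(π)}`. -/
noncomputable def F33 : Set (Partition × Partition) :=
  { pq | pq.1 ∈ E 3 3 ∧ pq.2 ∈ Iset (Nmk pq.1 2) }

/-!
If `2t` were `2`-marked, condition (2) of `C_<(k,r|p,t)` would force it to be
`μ^{(2)}_{p+1}`, and then condition (4) says its starting type is `s₀` or `s₁`, i.e.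
`2t - 1` or `2t - 2` is `1`-marked. Both conflict with the `1`-marked part `2t`, and the
greedy marking never gives conflicting parts the same mark.
-/

lemma mex1_not_mem (s : List ℕ) : mex1 s ∉ s :=
  (Nat.find_spec (exists_pos_not_mem s)).2

def MarkCompatible (a b : ℕ × ℕ) : Prop :=
  b.1 ≤ a.1 ∧ (conflict a.1 b.1 = true → a.2 ≠ b.2)

lemma ggAux_pairwise_markCompatible :
    ∀ (l : List ℕ) (acc : List (ℕ × ℕ)), acc.Pairwise MarkCompatible →
      l.Pairwise (· ≤ ·) → (∀ a ∈ acc, ∀ x ∈ l, a.1 ≤ x) →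
      (ggAux acc l).Pairwise MarkCompatible
  | [], _, hacc, _, _ => hacc
  | p :: rest, acc, hacc, hl, hle => by
    rw [ggAux]
    refine ggAux_pairwise_markCompatible rest _ (List.pairwise_cons.2 ⟨?_, hacc⟩) hl.of_cons ?_
    · intro a ha
      refine ⟨hle a ha p List.mem_cons_self, fun hc hmark => ?_⟩
      have : a.2 ∈ (acc.filter fun q => conflict p q.1).map Prod.snd :=
        List.mem_map_of_mem (List.mem_filter.2 ⟨ha, hc⟩)
      exact mex1_not_mem _ (hmark ▸ this)
    · intro a ha x hx
      rcases List.mem_cons.1 ha with rfl | ha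
      · exact List.rel_of_pairwise_cons hl hx
      · exact hle a ha x (List.mem_cons_of_mem _ hx)

lemma ggMarks_pairwise_markCompatible (π : Partition) :
    (ggMarks π).Pairwise MarkCompatible :=
  ggAux_pairwise_markCompatible _ _ List.Pairwise.nil (List.pairwise_reverse.2 π.sorted)
    (by simp)

lemma mem_of_mem_ggAux :
    ∀ (l : List ℕ) (acc : List (ℕ × ℕ)) {a : ℕ × ℕ}, a ∈ ggAux acc l → a ∈ acc ∨ a.1 ∈ l
  | [], _, _, h => Or.inl h
  | p :: rest, acc, a, h => by
    rw [ggAux] at h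
    rcases mem_of_mem_ggAux rest _ h with hacc | hrest
    · rcases List.mem_cons.1 hacc with rfl | hacc
      · exact Or.inr List.mem_cons_self
      · exact Or.inl hacc
    · exact Or.inr (List.mem_cons_of_mem _ hrest)

lemma Marked.mem_parts {π : Partition} {x m : ℕ} (h : Marked π x m) : x ∈ π.parts := by
  simpa using mem_of_mem_ggAux _ _ h

lemma Marked.mark_ne_of_conflict {π : Partition} {x y m n : ℕ} (hx : Marked π x m)
    (hy : Marked π y n) (hyx : y < x) (hc : conflict x y = true) : m ≠ n := by
  obtain ⟨i, hi, hxi⟩ := List.getElem_of_mem hx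
  obtain ⟨j, hj, hyj⟩ := List.getElem_of_mem hy
  have hsorted := ggMarks_pairwise_markCompatible π
  obtain hij | rfl | hji := lt_trichotomy i j
  · have := (List.pairwise_iff_getElem.1 hsorted i j hi hj hij).2
    rw [hxi, hyj] at this
    exact this hc
  · exact absurd (Prod.ext_iff.1 (hxi.symm.trans hyj)).1 hyx.ne'
  · have := (List.pairwise_iff_getElem.1 hsorted j i hj hi hji).1
    rw [hxi, hyj] at this
    exact absurd this (not_le.2 hyx)

lemma mem_row {π : Partition} {x i : ℕ} (h : Marked π x i) : x ∈ row π i :=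
  List.mem_map_of_mem (f := Prod.fst) (List.mem_filter.2 ⟨h, by simp⟩)

lemma row_sortedGE (π : Partition) (i : ℕ) : (row π i).SortedGE :=
  (((ggMarks_pairwise_markCompatible π).sublist List.filter_sublist).map _
    fun _ _ h => h.1).sortedGE

lemma rowVal_succ_of_getElem? {π : Partition} {i j x : ℕ} (h : (row π i)[j]? = some x) :
    rowVal π i (j + 1) = natE x := by
  simp [rowVal, h]

lemma nth_succ_of_getElem? {π : Partition} {i j x : ℕ} (h : (row π i)[j]? = some x) :
    nth π i (j + 1) = x := by
  simp [nth, List.getD_eq_getElem?_getD, h]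

lemma natE_lt_natE {a b : ℕ} : natE a < natE b ↔ a < b := by
  simp [natE]

lemma row_getElem?_eq_of_mem_of_between {π : Partition} {i p x : ℕ} (hx : x ∈ row π i)
    (hlt : rowVal π i (p + 1) < natE (x + 1)) (hgt : natE (x + 1) < rowVal π i p) :
    (row π i)[p]? = some x := by
  have hsorted := row_sortedGE π i
  obtain ⟨j, hj, rfl⟩ := List.getElem_of_mem hx
  have hpj : p ≤ j := by
    by_contra! hjp
    obtain ⟨q, rfl⟩ : ∃ q, p = q + 1 := Nat.exists_eq_succ_of_ne_zero (by omega)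
    have hq : q < (row π i).length := by
      by_contra! hq
      simp [rowVal, List.getElem?_eq_none hq] at hgt
    have hle := hsorted.getElem_ge_getElem_of_le (hi := hq) (hj := hj) (by omega)
    rw [rowVal_succ_of_getElem? (List.getElem?_eq_getElem hq), natE_lt_natE] at hgt
    omega
  have hp : p < (row π i).length := lt_of_le_of_lt hpj hj
  have hge := hsorted.getElem_ge_getElem_of_le (hi := hj) (hj := hp) hpj
  rw [rowVal_succ_of_getElem? (List.getElem?_eq_getElem hp), natE_lt_natE] at hlt
  rw [List.getElem?_eq_getElem hp]
  congr 1
  omega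

lemma marked_sub_one_or_sub_two_of_startType {π : Partition} {b : ℕ}
    (h : startType π b = 0 ∨ startType π b = 1) :
    Marked π (nth π 2 b - 1) 1 ∨ Marked π (nth π 2 b - 2) 1 := by
  cases b with
  | zero => simp [startType, startPair] at h
  | succ b =>
    unfold startType startPair at h
    simp only at h
    split_ifs at h <;> simp_all

theorem no_two_marked_2t_general (k r p t : ℕ)
    (μ : Partition) (hμ : μ ∈ Clt k r p t)
    (h1 : Marked μ (2 * t) 1) :
    ¬ Marked μ (2 * t) 2 := by
  intro h2
  obtain ⟨-, -, hlt, hgt, -, hstart⟩ := hμ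
  have ht : 0 < t := by have := μ.pos _ h1.mem_parts; omega
  have hget := row_getElem?_eq_of_mem_of_between (mem_row h2) hlt hgt
  have hlow := marked_sub_one_or_sub_two_of_startType (hstart (rowVal_succ_of_getElem? hget))
  rw [nth_succ_of_getElem? hget] at hlow
  rcases hlow with hlow | hlow
  · exact h1.mark_ne_of_conflict hlow (by omega) (by simp [conflict]; omega) rfl
  · exact h1.mark_ne_of_conflict hlow (by omega) (by simp [conflict]; omega) rfl

/-- Proposition 4.1 (extended to all of `C_<(k,r|p,t)`): if `μ ∈ C_<(k,r|p,t)`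
has a 1-marked part `2t` in `GG(μ)`, then there is no 2-marked `2t` in
`GG(μ)`. -/
theorem no_two_marked_2t (k r p t : ℕ) (hrk : r ≤ k) (hr : 3 ≤ r)
    (μ : Partition) (hμ : μ ∈ Clt k r p t)
    (h1 : Marked μ (2 * t) 1) :
    ¬ Marked μ (2 * t) 2 :=
  no_two_marked_2t_general k r p t μ hμ h1

end Bressoud
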